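/- arXiv:2408.14981 — 2 statements merged into one kernel-verified Lean document; each statement's English description precedes it below -/
import Mathlib

section
/- Let (X, T) and (Y, S) be topological dynamical systems and f ∈ C(X × Y). If (X, T) has the specification property, then the limit lim_{k→∞} max_{y ∈ Y} min_{x ∈ X} (1/k) Σ_{j=0}^{k−1} f(T^j x, S^j y) exists. -/
open MeasureTheory Filter Topology
open scoped ENNReal NNReal

noncomputable section

/-- Birkhoff average `A_k f(x, y) = (1/k) Σ_{j<k} f(T^j x, S^j y)`. -/
def birk2 {X Y : Type*} (T : X → X) (S : Y → Y) (f : X × Y → ℝ) (k : ℕ) (x : X) (y : Y) : ℝ :=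
  (k : ℝ)⁻¹ * ∑ j ∈ Finset.range k, f ((Prod.map T S)^[j] (x, y))

/-- The set of invariant Borel probability measures of a map. -/
def invMeas {Z : Type*} [MeasurableSpace Z] (U : Z → Z) : Set (ProbabilityMeasure Z) :=
  {μ | μ.toMeasure.map U = μ.toMeasure}

/-- `ψ_f(ν) = min { ∫ f dλ : λ ∈ M_{T×S}(X × Y), (π_Y)_* λ = ν }`. -/
def psi2 {X Y : Type*} [MeasurableSpace X] [MeasurableSpace Y]
    (T : X → X) (S : Y → Y) (f : X × Y → ℝ) (ν : ProbabilityMeasure Y) : ℝ :=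
  sInf {r | ∃ lam ∈ invMeas (Prod.map T S), lam.toMeasure.map Prod.snd = ν.toMeasure ∧
    r = ∫ p, f p ∂lam.toMeasure}

/-- `α(f) = sup_{ν ∈ M_S(Y)} ψ_f(ν)`. -/
def alpha2 {X Y : Type*} [MeasurableSpace X] [MeasurableSpace Y]
    (T : X → X) (S : Y → Y) (f : X × Y → ℝ) : ℝ :=
  sSup {r | ∃ ν ∈ invMeas S, r = psi2 T S f ν}

/-- `R_f`: points `(x, y)` whose Birkhoff averages converge. -/
def reg2 {X Y : Type*} (T : X → X) (S : Y → Y) (f : X × Y → ℝ) : Set (X × Y) :=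
  {p | ∃ L : ℝ, Tendsto (fun k : ℕ => birk2 T S f k p.1 p.2) atTop (𝓝 L)}

/-- `β(f) = sup_{y ∈ π_Y(R_f)} inf_{(x,y) ∈ R_f} lim_k A_k f(x, y)`. -/
def beta2 {X Y : Type*} (T : X → X) (S : Y → Y) (f : X × Y → ℝ) : ℝ :=
  sSup {r | ∃ y : Y, (∃ x : X, (x, y) ∈ reg2 T S f) ∧
    r = sInf {L | ∃ x : X, (x, y) ∈ reg2 T S f ∧
      Tendsto (fun k : ℕ => birk2 T S f k x y) atTop (𝓝 L)}}

/-- `γ(f) = sup_{y ∈ Y} inf_{x ∈ X} limsup_k A_k f(x, y)`. -/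
def gamma2 {X Y : Type*} (T : X → X) (S : Y → Y) (f : X × Y → ℝ) : ℝ :=
  ⨆ y : Y, ⨅ x : X, limsup (fun k : ℕ => birk2 T S f k x y) atTop

/-- `δ(f) = limsup_k max_{y ∈ Y} min_{x ∈ X} A_k f(x, y)`. -/
def delta2 {X Y : Type*} (T : X → X) (S : Y → Y) (f : X × Y → ℝ) : ℝ :=
  limsup (fun k : ℕ => ⨆ y : Y, ⨅ x : X, birk2 T S f k x y) atTop

/-- The invariant probability measures supported on a single closed (periodic) orbit. -/
def Mco {Z : Type*} [MeasurableSpace Z] (U : Z → Z) : Set (ProbabilityMeasure Z) :=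
  {μ | ∃ (k : ℕ) (z : Z), 0 < k ∧ U^[k] z = z ∧
    μ.toMeasure = (k : ℝ≥0∞)⁻¹ • ∑ j ∈ Finset.range k, Measure.dirac (U^[j] z)}

/-- `α_per(f)`: as `α(f)`, but with both measures ranging over closed-orbit measures. -/
def alphaPer2 {X Y : Type*} [MeasurableSpace X] [MeasurableSpace Y]
    (T : X → X) (S : Y → Y) (f : X × Y → ℝ) : ℝ :=
  sSup {r | ∃ ν ∈ Mco S,
    r = sInf {t | ∃ lam ∈ Mco (Prod.map T S), lam.toMeasure.map Prod.snd = ν.toMeasure ∧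
      t = ∫ p, f p ∂lam.toMeasure}}

/-- The set of periodic points. -/
def perPts {Z : Type*} (U : Z → Z) : Set Z :=
  {z | ∃ t : ℕ, 0 < t ∧ U^[t] z = z}

/-- `δ_per(f) = limsup_k sup_{y ∈ Per_S(Y)} inf_{x ∈ Per_T(X)} A_k f(x, y)`. -/
def deltaPer2 {X Y : Type*} (T : X → X) (S : Y → Y) (f : X × Y → ℝ) : ℝ :=
  limsup (fun k : ℕ => sSup {r | ∃ y ∈ perPts S,
    r = sInf {t | ∃ x ∈ perPts T, t = birk2 T S f k x y}}) atTop

/-- The `j`-th power (`j : ℤ`) of a homeomorphism, applied to a point. -/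
def zit {X : Type*} [TopologicalSpace X] (T : X ≃ₜ X) (j : ℤ) (x : X) : X :=
  (T.toEquiv ^ j) x

/-- The specification property for `(X, T)` (with respect to the metric of `X`):
for every `η > 0` there is `D = D(η)` such that every `D`-spaced specification
`ξ = (x_i, [a_i, b_i])_{i=1}^n` admits an `η`-tracing point. -/
def SpecProp {X : Type*} [MetricSpace X] (T : X ≃ₜ X) : Prop :=
  ∀ η : ℝ, 0 < η → ∃ D : ℕ, 0 < D ∧
    ∀ (n : ℕ) (x : Fin (n + 1) → X) (a b : Fin (n + 1) → ℤ),
      (∀ i, a i ≤ b i) →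
      (∀ i : Fin n, (D : ℤ) ≤ a i.succ - b i.castSucc) →
      ∃ x' : X, ∀ i : Fin (n + 1), ∀ j : ℤ, a i ≤ j → j ≤ b i →
        dist (zit T j x') (zit T j (x i)) < η

/-- The periodic specification property for `(X, T)`: as `SpecProp`, but the tracing
point can moreover be chosen of period `b_n - a_1 + D`. -/
def PerSpecProp {X : Type*} [MetricSpace X] (T : X ≃ₜ X) : Prop :=
  ∀ η : ℝ, 0 < η → ∃ D : ℕ, 0 < D ∧
    ∀ (n : ℕ) (x : Fin (n + 1) → X) (a b : Fin (n + 1) → ℤ),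
      (∀ i, a i ≤ b i) →
      (∀ i : Fin n, (D : ℤ) ≤ a i.succ - b i.castSucc) →
      ∃ x' : X, (∀ i : Fin (n + 1), ∀ j : ℤ, a i ≤ j → j ≤ b i →
          dist (zit T j x') (zit T j (x i)) < η) ∧
        zit T (b (Fin.last n) - a 0 + (D : ℤ)) x' = x'

/-! Write `u k = max_y min_x ∑_{j<k} f (T^j x, S^j y)` and `C = ‖f‖_∞`. Given `ε`, uniform
continuity of `f` gives `η`, and specification gives a gap `D = D(η)`. For a fixed `y`, pick for
each of `q` blocks `[i (k + D), i (k + D) + k)` of the orbit of `y` a near-minimizing `x_i` of the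
block sum; a point tracing the orbit segments of the `x_i` shows
`u (q (k + D) + r) ≤ q u k + q k ε + (q D + r) C`. This near subadditivity yields, as in Fekete's
lemma, `limsup u n / n ≤ liminf u n / n + ε`. -/

open Finset

lemma sum_range_mul_eq_sum_sum {M : Type*} [AddCommMonoid M] (g : ℕ → M) (m q : ℕ) :
    ∑ j ∈ range (q * m), g j = ∑ i ∈ range q, ∑ l ∈ range m, g (i * m + l) := by
  induction q with
  | zero => simp
  | succ q ih => rw [Nat.succ_mul, sum_range_add, ih, sum_range_succ]

lemma sum_range_le_sum_blocks_add {g : ℕ → ℝ} {C : ℝ} (hg : ∀ j, g j ≤ C) (k D q r : ℕ) :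
    ∑ j ∈ range (q * (k + D) + r), g j
      ≤ ∑ i ∈ range q, ∑ l ∈ range k, g (i * (k + D) + l) + (q * D + r) * C := by
  have hsum_le : ∀ (s : Finset ℕ) (h : ℕ → ℕ), ∑ l ∈ s, g (h l) ≤ #s * C := fun s h => by
    simpa using sum_le_card_nsmul s (fun l => g (h l)) C fun l _ => hg (h l)
  have hblock : ∀ i, ∑ l ∈ range (k + D), g (i * (k + D) + l)
      ≤ ∑ l ∈ range k, g (i * (k + D) + l) + D * C := fun i => by
    rw [sum_range_add]
    simpa using hsum_le (range D) (fun l => i * (k + D) + (k + l))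
  calc ∑ j ∈ range (q * (k + D) + r), g j
      = ∑ i ∈ range q, ∑ l ∈ range (k + D), g (i * (k + D) + l)
          + ∑ l ∈ range r, g (q * (k + D) + l) := by
        rw [sum_range_add, sum_range_mul_eq_sum_sum]
    _ ≤ ∑ i ∈ range q, (∑ l ∈ range k, g (i * (k + D) + l) + D * C) + r * C := by
        gcongr with i
        · exact hblock i
        · simpa using hsum_le (range r) (fun l => q * (k + D) + l)
    _ = ∑ i ∈ range q, ∑ l ∈ range k, g (i * (k + D) + l) + (q * D + r) * C := by
        rw [sum_add_distrib, sum_const, card_range, nsmul_eq_mul]; ring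

section SubadditiveWithGaps

variable {u : ℕ → ℝ} {C : ℝ}

-- The lower bound `u k ≥ -k C` absorbs the difference between `q k` and `n = q (k + D) + r`.
lemma div_le_div_add_of_le_gap {ε : ℝ} {k D q r : ℕ} (hC : 0 ≤ C) (hε : 0 ≤ ε)
    (huk : -(k * C) ≤ u k) (hk : 0 < k) (hq : 0 < q) (hr : r < k + D)
    (hle : u (q * (k + D) + r) ≤ q * u k + q * k * ε + (q * D + r) * C) :
    u (q * (k + D) + r) / ↑(q * (k + D) + r)
      ≤ u k / k + ε + 2 * D * C / k + 2 * (k + D) * C / ↑(q * (k + D) + r) := by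
  set n := q * (k + D) + r with hn
  have hkR : (0 : ℝ) < k := by exact_mod_cast hk
  have hnR : (0 : ℝ) < n := by positivity
  have hnq : (n : ℝ) = q * k + (q * D + r) := by rw [hn]; push_cast; ring
  have hqk : (q : ℝ) ≤ n / k := by
    rw [le_div_iff₀ hkR, hnq]; exact le_add_of_nonneg_right (by positivity)
  have hrR : (r : ℝ) ≤ k + D := by exact_mod_cast hr.le
  set a := u k / k
  have hua : u k = k * a := by simp only [a]; field_simp
  have ha : -C ≤ a := by rw [le_div_iff₀ hkR]; linarith
  have hqDr : (0 : ℝ) ≤ q * D + r := by positivity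
  have key : u n ≤ n * a + n * ε + 2 * (n / k) * D * C + 2 * (k + D) * C := by
    have h1 : q * k * a ≤ n * a + (q * D + r) * C := by rw [hnq]; nlinarith
    have h2 : q * k * ε ≤ n * ε := by rw [hnq]; nlinarith
    have h3 : q * D * C ≤ (n / k) * D * C := by gcongr
    have h4 : r * C ≤ (k + D) * C := by gcongr
    rw [hua] at hle
    nlinarith
  rw [div_le_iff₀ hnR]
  calc u n ≤ n * a + n * ε + 2 * (n / k) * D * C + 2 * (k + D) * C := key
    _ = (a + ε + 2 * D * C / k + 2 * (k + D) * C / n) * n := by field_simp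

theorem exists_tendsto_div_of_le_gap (hu : ∀ n, |u n| ≤ n * C)
    (hgap : ∀ ε > 0, ∃ D : ℕ, ∀ k q r : ℕ, 0 < k → 0 < q →
      u (q * (k + D) + r) ≤ q * u k + q * k * ε + (q * D + r) * C) :
    ∃ L, Tendsto (fun n => u n / n) atTop (𝓝 L) := by
  set a : ℕ → ℝ := fun n => u n / n
  have hC : 0 ≤ C := by simpa using (abs_nonneg _).trans (hu 1)
  have ha : ∀ n, |a n| ≤ C := fun n => by
    rcases Nat.eq_zero_or_pos n with rfl | hn
    · simpa [a] using hC
    · rw [abs_div, Nat.abs_cast, div_le_iff₀ (by exact_mod_cast hn), mul_comm]; exact hu n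
  have hbdd_le : IsBoundedUnder (· ≤ ·) atTop a :=
    isBoundedUnder_of ⟨C, fun n => (abs_le.1 (ha n)).2⟩
  have hbdd_ge : IsBoundedUnder (· ≥ ·) atTop a :=
    isBoundedUnder_of ⟨-C, fun n => (abs_le.1 (ha n)).1⟩
  refine ⟨liminf a atTop, tendsto_of_liminf_eq_limsup rfl ?_ hbdd_le hbdd_ge⟩
  refine le_antisymm (le_of_forall_pos_le_add fun ε hε => ?_) (liminf_le_limsup hbdd_le hbdd_ge)
  obtain ⟨D, hD⟩ := hgap (ε / 4) (by positivity)
  have hsmall : ∀ c : ℝ, ∀ᶠ n : ℕ in atTop, c / n < ε / 4 := fun c =>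
    (tendsto_const_div_atTop_nhds_zero_nat c).eventually (gt_mem_nhds (by positivity))
  obtain ⟨k, hak, hk, hkD⟩ := ((frequently_lt_of_liminf_lt hbdd_le.isCoboundedUnder_ge
    (lt_add_of_pos_right _ (by positivity : 0 < ε / 4))).and_eventually
    ((eventually_gt_atTop 0).and (hsmall (2 * D * C)))).exists
  refine limsup_le_of_le hbdd_ge.isCoboundedUnder_le ?_
  filter_upwards [eventually_ge_atTop (k + D), hsmall (2 * (k + D) * C)] with n hn hnD
  have hkD : 0 < k + D := by omega
  have hq : 0 < n / (k + D) := Nat.div_pos hn hkD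
  have hdecomp : n / (k + D) * (k + D) + n % (k + D) = n := Nat.div_add_mod' n (k + D)
  have hbound := div_le_div_add_of_le_gap hC (by positivity) (neg_le_of_abs_le (hu k)) hk hq
    (Nat.mod_lt n hkD) (hD k _ _ hk hq)
  rw [hdecomp] at hbound
  calc a n ≤ a k + ε / 4 + 2 * D * C / k + 2 * (k + D) * C / n := hbound
    _ ≤ liminf a atTop + ε := by linarith

end SubadditiveWithGaps

section Specification

variable {X : Type*}

lemma zit_natCast [TopologicalSpace X] (T : X ≃ₜ X) (m : ℕ) (x : X) :
    zit T m x = T^[m] x := by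
  rw [zit, zpow_natCast, ← Equiv.Perm.iterate_eq_pow]; rfl

lemma zit_zit [TopologicalSpace X] (T : X ≃ₜ X) (j c : ℤ) (x : X) :
    zit T j (zit T c x) = zit T (j + c) x := by
  simp [zit, zpow_add, Equiv.Perm.mul_apply]

theorem SpecProp.exists_dist_iterate_lt [MetricSpace X] {T : X ≃ₜ X} (hT : SpecProp T)
    {η : ℝ} (hη : 0 < η) :
    ∃ D : ℕ, ∀ (k q : ℕ) (ξ : ℕ → X), 0 < k → 0 < q → ∃ x' : X,
      ∀ i < q, ∀ l < k, dist (T^[i * (k + D) + l] x') (T^[l] (ξ i)) < η := by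
  obtain ⟨D, -, hD⟩ := hT η hη
  refine ⟨D, fun k q ξ hk hq => ?_⟩
  obtain ⟨n, rfl⟩ : ∃ n, q = n + 1 := ⟨q - 1, by omega⟩
  let start : Fin (n + 1) → ℤ := fun i => ((i * (k + D) : ℕ) : ℤ)
  obtain ⟨x', hx'⟩ := hD n (fun i => zit T (-start i) (ξ i)) start (fun i => start i + k - 1)
    (fun i => by simp only [start]; omega)
    (fun i => by simp only [start, Fin.val_succ, Fin.val_castSucc]; push_cast; nlinarith)
  refine ⟨x', fun i hi l hl => ?_⟩
  have h := hx' ⟨i, hi⟩ ((i * (k + D) + l : ℕ) : ℤ) (by simp only [start]; omega)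
    (by simp only [start]; omega)
  rwa [zit_natCast, zit_zit, show ((i * (k + D) + l : ℕ) : ℤ) + -start ⟨i, hi⟩ = (l : ℕ) by
    simp only [start]; push_cast; ring, zit_natCast] at h

end Specification

section OrbitSum

variable {X Y : Type*} (T : X → X) (S : Y → Y) (f : X × Y → ℝ)

def orbitSum (k : ℕ) (x : X) (y : Y) : ℝ :=
  ∑ j ∈ range k, f ((Prod.map T S)^[j] (x, y))

def minOrbitSum (k : ℕ) (y : Y) : ℝ :=
  ⨅ x : X, orbitSum T S f k x y

def maxMinOrbitSum (k : ℕ) : ℝ :=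
  ⨆ y : Y, minOrbitSum T S f k y

lemma iSup_iInf_birk2_eq (k : ℕ) :
    ⨆ y : Y, ⨅ x : X, birk2 T S f k x y = maxMinOrbitSum T S f k / k := by
  simp only [birk2, maxMinOrbitSum, minOrbitSum, orbitSum, ← Real.mul_iInf_of_nonneg
    (inv_nonneg.2 k.cast_nonneg), ← Real.mul_iSup_of_nonneg (inv_nonneg.2 k.cast_nonneg),
    div_eq_inv_mul]

variable {T S f} {C : ℝ} (hC : ∀ p, |f p| ≤ C)
include hC

lemma abs_orbitSum_le (k : ℕ) (x : X) (y : Y) : |orbitSum T S f k x y| ≤ k * C :=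
  (abs_sum_le_sum_abs _ _).trans <| by
    simpa using sum_le_card_nsmul (range k) (fun j => |f ((Prod.map T S)^[j] (x, y))|) C
      fun j _ => hC _

lemma minOrbitSum_le (k : ℕ) (x : X) (y : Y) : minOrbitSum T S f k y ≤ orbitSum T S f k x y :=
  ciInf_le ⟨-(k * C), by rintro _ ⟨x, rfl⟩; exact neg_le_of_abs_le (abs_orbitSum_le hC k x y)⟩ x

lemma abs_minOrbitSum_le [Nonempty X] (k : ℕ) (y : Y) : |minOrbitSum T S f k y| ≤ k * C :=
  abs_le.2 ⟨le_ciInf fun x => neg_le_of_abs_le (abs_orbitSum_le hC k x y),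
    (minOrbitSum_le hC k (Classical.arbitrary X) y).trans (le_of_abs_le (abs_orbitSum_le hC ..))⟩

lemma minOrbitSum_le_maxMinOrbitSum [Nonempty X] (k : ℕ) (y : Y) :
    minOrbitSum T S f k y ≤ maxMinOrbitSum T S f k :=
  le_ciSup ⟨k * C, by rintro _ ⟨y, rfl⟩; exact le_of_abs_le (abs_minOrbitSum_le hC k y)⟩ y

lemma abs_maxMinOrbitSum_le [Nonempty X] [Nonempty Y] (k : ℕ) :
    |maxMinOrbitSum T S f k| ≤ k * C :=
  abs_le.2 ⟨(neg_le_of_abs_le (abs_minOrbitSum_le hC k (Classical.arbitrary Y))).trans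
    (minOrbitSum_le_maxMinOrbitSum hC k _),
    ciSup_le fun y => le_of_abs_le (abs_minOrbitSum_le hC k y)⟩

end OrbitSum

section Shadowing

variable {X Y : Type*} [MetricSpace X] {T : X → X} {S : Y → Y} {f : X × Y → ℝ} {C ε η : ℝ}

lemma orbitSum_le_of_dist_iterate_lt (hC : ∀ p, |f p| ≤ C)
    (hUC : ∀ x x' y, dist x x' < η → |f (x, y) - f (x', y)| ≤ ε)
    {k D q : ℕ} (r : ℕ) (y : Y) {x' : X} {ξ : ℕ → X}
    (hx' : ∀ i < q, ∀ l < k, dist (T^[i * (k + D) + l] x') (T^[l] (ξ i)) < η) :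
    orbitSum T S f (q * (k + D) + r) x' y
      ≤ ∑ i ∈ range q, orbitSum T S f k (ξ i) (S^[i * (k + D)] y) + q * k * ε
        + (q * D + r) * C := by
  have hblock : ∀ i ∈ range q, ∑ l ∈ range k, f ((Prod.map T S)^[i * (k + D) + l] (x', y))
      ≤ orbitSum T S f k (ξ i) (S^[i * (k + D)] y) + k * ε := fun i hi => by
    calc ∑ l ∈ range k, f ((Prod.map T S)^[i * (k + D) + l] (x', y))
        ≤ ∑ l ∈ range k, (f ((Prod.map T S)^[l] (ξ i, S^[i * (k + D)] y)) + ε) :=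
          sum_le_sum fun l hl => ?_
      _ = _ := by rw [sum_add_distrib, sum_const, card_range, nsmul_eq_mul]; rfl
    have hd := hUC _ _ (S^[l] (S^[i * (k + D)] y)) (hx' i (mem_range.1 hi) l (mem_range.1 hl))
    have hS : S^[i * (k + D) + l] y = S^[l] (S^[i * (k + D)] y) := by
      rw [add_comm, Function.iterate_add_apply]
    rw [Prod.map_iterate, Prod.map_iterate, Prod.map_apply, Prod.map_apply, hS]
    linarith [(abs_sub_le_iff.1 hd).1]
  calc orbitSum T S f (q * (k + D) + r) x' y
      ≤ ∑ i ∈ range q, ∑ l ∈ range k, f ((Prod.map T S)^[i * (k + D) + l] (x', y))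
          + (q * D + r) * C :=
        sum_range_le_sum_blocks_add (fun j => le_of_abs_le (hC _)) k D q r
    _ ≤ ∑ i ∈ range q, (orbitSum T S f k (ξ i) (S^[i * (k + D)] y) + k * ε)
          + (q * D + r) * C := by gcongr with i hi; exact hblock i hi
    _ = _ := by rw [sum_add_distrib, sum_const, card_range, nsmul_eq_mul, mul_assoc]

theorem SpecProp.exists_maxMinOrbitSum_le [Nonempty X] [Nonempty Y] {T : X ≃ₜ X}
    (hT : SpecProp T) (hC : ∀ p, |f p| ≤ C) (hη : 0 < η)
    (hUC : ∀ x x' y, dist x x' < η → |f (x, y) - f (x', y)| ≤ ε) :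
    ∃ D : ℕ, ∀ k q r : ℕ, 0 < k → 0 < q →
      maxMinOrbitSum T S f (q * (k + D) + r)
        ≤ q * maxMinOrbitSum T S f k + q * k * ε + (q * D + r) * C := by
  obtain ⟨D, htrace⟩ := hT.exists_dist_iterate_lt hη
  refine ⟨D, fun k q r hk hq => ciSup_le fun y => le_of_forall_pos_le_add fun δ hδ => ?_⟩
  have hqR : (0 : ℝ) < q := by exact_mod_cast hq
  have hnear : ∀ i : ℕ, ∃ x : X, orbitSum T S f k x (S^[i * (k + D)] y)
      < minOrbitSum T S f k (S^[i * (k + D)] y) + δ / q := fun i =>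
    exists_lt_of_ciInf_lt (lt_add_of_pos_right _ (div_pos hδ hqR))
  choose ξ hξ using hnear
  obtain ⟨x', hx'⟩ := htrace k q ξ hk hq
  calc minOrbitSum T S f (q * (k + D) + r) y
      ≤ orbitSum T S f (q * (k + D) + r) x' y := minOrbitSum_le hC _ x' y
    _ ≤ ∑ i ∈ range q, orbitSum T S f k (ξ i) (S^[i * (k + D)] y) + q * k * ε
          + (q * D + r) * C := orbitSum_le_of_dist_iterate_lt hC hUC r y hx'
    _ ≤ ∑ _i ∈ range q, (maxMinOrbitSum T S f k + δ / q) + q * k * ε + (q * D + r) * C := by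
        gcongr with i
        exact (hξ i).le.trans (by gcongr; exact minOrbitSum_le_maxMinOrbitSum hC k _)
    _ = q * maxMinOrbitSum T S f k + q * k * ε + (q * D + r) * C + δ := by
        rw [sum_const, card_range, nsmul_eq_mul]; field_simp; ring

end Shadowing

/-- if `(X, T)` has the specification property, then the limit
`lim_{k→∞} max_{y ∈ Y} min_{x ∈ X} (1/k) Σ_{j<k} f(T^j x, S^j y)` exists. -/
theorem stmt10
    {X Y : Type*}
    [MetricSpace X] [CompactSpace X] [Nonempty X]
    [MetricSpace Y] [CompactSpace Y] [Nonempty Y]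
    (T : X ≃ₜ X) (S : Y ≃ₜ Y) (f : X × Y → ℝ) (hf : Continuous f)
    (hspecX : SpecProp T) :
    ∃ L : ℝ, Tendsto (fun k : ℕ => ⨆ y : Y, ⨅ x : X, birk2 (⇑T) (⇑S) f k x y)
      atTop (𝓝 L) := by
  obtain ⟨C, hC⟩ : ∃ C, ∀ p, |f p| ≤ C := by
    simpa using isCompact_univ.exists_bound_of_continuousOn hf.continuousOn
  have hUC : ∀ ε > 0, ∃ η > 0, ∀ x x' y, dist x x' < η → |f (x, y) - f (x', y)| ≤ ε :=
    fun ε hε => by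
      obtain ⟨η, hη, h⟩ := Metric.uniformContinuous_iff.1
        (CompactSpace.uniformContinuous_of_continuous hf) ε hε
      refine ⟨η, hη, fun x x' y hx => ?_⟩
      rw [← Real.dist_eq]
      exact (h (a := (x, y)) (b := (x', y)) (by simpa [Prod.dist_eq] using hx)).le
  simp only [iSup_iInf_birk2_eq]
  refine exists_tendsto_div_of_le_gap (abs_maxMinOrbitSum_le hC) fun ε hε => ?_
  obtain ⟨η, hη, hη'⟩ := hUC ε hε
  exact hspecX.exists_maxMinOrbitSum_le hC hη hη'
end
end

section
/- Let (X, T) and (Y, S) be topological dynamical systems and f ∈ C(X × Y). If (Y, S) has the periodic specification property and (X, T) has at least one periodic point (Per_T(X) ≠ ∅), then β(f) ≥ δ(f). In particular this holds when both (X, T) and (Y, S) have the periodic specification property. -/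
open MeasureTheory Filter Topology
open scoped ENNReal NNReal

noncomputable section

open Function

/-! Choose a time `k` and a point `y` such that `A_k f(x, y)` is almost `δ(f)` uniformly in `x`.
Periodic specification traces the segment `y, …, S^k y` by a point `y'` of period `k + D`.
By uniform continuity of `f`, and since `D` is negligible against `k`, every block of length
`k + D` along the orbit of any `(x, y')` has average at least `δ(f) - ε`, hence so has every
limit of Birkhoff averages at `(x, y')`. Pairing `y'` with a periodic point of `T` gives a
periodic, hence regular, point `(x₀, y')`; thus `y' ∈ π_Y(R_f)` and `β(f) ≥ δ(f) - ε`. -/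

section BirkhoffAverage

variable {α : Type*} {f : α → α} {g : α → ℝ}

lemma abs_birkhoffSum_le {M : ℝ} (hg : ∀ x, |g x| ≤ M) (n : ℕ) (x : α) :
    |birkhoffSum f g n x| ≤ n * M :=
  calc |birkhoffSum f g n x| ≤ ∑ k ∈ Finset.range n, |g (f^[k] x)| :=
        Finset.abs_sum_le_sum_abs _ _
    _ ≤ ∑ _k ∈ Finset.range n, M := Finset.sum_le_sum fun k _ => hg (f^[k] x)
    _ = n * M := by simp

lemma abs_birkhoffAverage_le {M : ℝ} (hg : ∀ x, |g x| ≤ M) (n : ℕ) (x : α) :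
    |birkhoffAverage ℝ f g n x| ≤ M := by
  rcases eq_or_ne n 0 with rfl | hn
  · simpa using (abs_nonneg (g x)).trans (hg x)
  rw [birkhoffAverage, smul_eq_mul, abs_mul, abs_inv, Nat.abs_cast,
    inv_mul_le_iff₀ (by positivity)]
  exact abs_birkhoffSum_le hg n x

lemma le_birkhoffAverage {c : ℝ} {n : ℕ} {x : α} (hn : n ≠ 0)
    (h : ∀ k < n, c ≤ g (f^[k] x)) : c ≤ birkhoffAverage ℝ f g n x := by
  rw [birkhoffAverage, smul_eq_mul, le_inv_mul_iff₀ (by positivity)]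
  calc n * c = ∑ _k ∈ Finset.range n, c := by simp
    _ ≤ birkhoffSum f g n x := Finset.sum_le_sum fun k hk => h k (Finset.mem_range.1 hk)

lemma birkhoffSum_mul (f : α → α) (g : α → ℝ) (m n : ℕ) (x : α) :
    birkhoffSum f g (m * n) x = birkhoffSum f^[n] (birkhoffSum f g n) m x := by
  induction m with
  | zero => simp
  | succ m ih =>
    rw [add_mul, one_mul, birkhoffSum_add, ih, birkhoffSum_succ, ← iterate_mul, mul_comm n]

lemma birkhoffAverage_mul (f : α → α) (g : α → ℝ) (m n : ℕ) (x : α) :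
    birkhoffAverage ℝ f g (m * n) x =
      birkhoffAverage ℝ f^[n] (birkhoffAverage ℝ f g n) m x := by
  rw [birkhoffAverage, birkhoffAverage, birkhoffSum_mul, birkhoffSum, birkhoffSum]
  simp only [birkhoffAverage, smul_eq_mul, ← Finset.mul_sum, Nat.cast_mul, mul_inv, mul_assoc]

lemma le_of_tendsto_birkhoffAverage {s : Set α} {n : ℕ} {c L : ℝ} {x : α} (hn : n ≠ 0)
    (hs : Set.MapsTo f^[n] s s) (hc : ∀ y ∈ s, c ≤ birkhoffAverage ℝ f g n y) (hx : x ∈ s)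
    (hL : Tendsto (birkhoffAverage ℝ f g · x) atTop (𝓝 L)) : c ≤ L := by
  have hmul : Tendsto (· * n) atTop atTop :=
    tendsto_atTop_mono (fun m => Nat.le_mul_of_pos_right m (Nat.pos_of_ne_zero hn)) tendsto_id
  refine ge_of_tendsto (hL.comp hmul) ((eventually_ne_atTop 0).mono fun m hm => ?_)
  rw [comp_apply, birkhoffAverage_mul]
  exact le_birkhoffAverage hm fun k _ => hc _ (hs.iterate k hx)

lemma Function.IsPeriodicPt.tendsto_birkhoffAverage {q : ℕ} {x : α} (h : IsPeriodicPt f q x)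
    (hq : q ≠ 0) (g : α → ℝ) :
    Tendsto (birkhoffAverage ℝ f g · x) atTop (𝓝 (birkhoffAverage ℝ f g q x)) := by
  set c := birkhoffAverage ℝ f g q x
  set F : ℕ → ℝ := fun n => birkhoffSum f g n x - n * c
  have hsum : birkhoffSum f g q x = q * c := by
    simp only [c, birkhoffAverage, smul_eq_mul]
    field_simp
  have hF : Periodic F q := fun n => by
    simp only [F, add_comm n q, birkhoffSum_add, h.eq, hsum]
    push_cast
    ring
  set C := ∑ k ∈ Finset.range q, |F k|
  have hC : ∀ n, |F n| ≤ C := fun n => by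
    rw [← hF.map_mod_nat n]
    exact Finset.single_le_sum (f := fun k => |F k|) (fun _ _ => abs_nonneg _)
      (Finset.mem_range.2 (Nat.mod_lt n (Nat.pos_of_ne_zero hq)))
  have hF0 : Tendsto (fun n : ℕ => F n / n) atTop (𝓝 0) := by
    refine squeeze_zero_norm (fun n => ?_) (tendsto_const_div_atTop_nhds_zero_nat C)
    rw [Real.norm_eq_abs, abs_div, Nat.abs_cast]
    gcongr
    exact hC n
  rw [← add_zero c]
  refine (hF0.const_add c).congr' ((eventually_ne_atTop 0).mono fun n hn => ?_)
  simp only [F, birkhoffAverage, smul_eq_mul]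
  field_simp
  ring

/-- The first `k` steps cost at most `ε` per step; the `D` free steps cost at most `2 D M`,
which `hkD` absorbs into a second `ε`. -/
lemma le_birkhoffAverage_add_of_dist_le {M ε c : ℝ} {k D : ℕ} {x y : α}
    (hg : ∀ z, |g z| ≤ M) (hk : k ≠ 0)
    (hxy : ∀ s < k, dist (g (f^[s] x)) (g (f^[s] y)) ≤ ε)
    (hy : c ≤ birkhoffAverage ℝ f g k y) (hkD : 2 * D * M ≤ k * ε) :
    c - 2 * ε ≤ birkhoffAverage ℝ f g (k + D) x := by
  have hε : 0 ≤ ε := dist_nonneg.trans (hxy 0 (Nat.pos_of_ne_zero hk))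
  have hcM : c ≤ M := hy.trans (le_of_abs_le (abs_birkhoffAverage_le hg k y))
  have hky : k * c ≤ birkhoffSum f g k y := by
    rwa [birkhoffAverage, smul_eq_mul, le_inv_mul_iff₀ (by positivity)] at hy
  have hkx : birkhoffSum f g k y - k * ε ≤ birkhoffSum f g k x := by
    have hdist : dist (birkhoffSum f g k x) (birkhoffSum f g k y) ≤ k * ε :=
      calc _ ≤ ∑ s ∈ Finset.range k, dist (g (f^[s] x)) (g (f^[s] y)) :=
            dist_birkhoffSum_birkhoffSum_le f g k x y
        _ ≤ ∑ _s ∈ Finset.range k, ε :=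
            Finset.sum_le_sum fun s hs => hxy s (Finset.mem_range.1 hs)
        _ = k * ε := by simp
    linarith [(abs_le.1 (Real.dist_eq _ _ ▸ hdist)).1]
  have htail : -(D * M) ≤ birkhoffSum f g D (f^[k] x) :=
    neg_le_of_abs_le (abs_birkhoffSum_le hg D _)
  rw [birkhoffAverage, smul_eq_mul, le_inv_mul_iff₀ (by positivity), birkhoffSum_add]
  push_cast
  nlinarith [mul_le_mul_of_nonneg_left hcM (Nat.cast_nonneg D : (0 : ℝ) ≤ D),
    mul_nonneg (Nat.cast_nonneg D : (0 : ℝ) ≤ D) hε]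

end BirkhoffAverage

lemma zit_natCast_s18 {Z : Type*} [TopologicalSpace Z] (T : Z ≃ₜ Z) (n : ℕ) (z : Z) :
    zit T n z = T^[n] z := by
  rw [zit, zpow_natCast, ← Equiv.Perm.iterate_eq_pow]
  rfl

lemma PerSpecProp.exists_isPeriodicPt_tracing {Y : Type*} [MetricSpace Y] {S : Y ≃ₜ Y}
    (hS : PerSpecProp S) {η : ℝ} (hη : 0 < η) :
    ∃ D : ℕ, ∀ (k : ℕ) (y : Y), ∃ y', IsPeriodicPt S (k + D) y' ∧
      ∀ s ≤ k, dist (S^[s] y') (S^[s] y) < η := by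
  obtain ⟨D, -, hD⟩ := hS η hη
  refine ⟨D, fun k y => ?_⟩
  obtain ⟨y', htrace, hper⟩ := hD 0 (fun _ => y) (fun _ => 0) (fun _ => k)
    (fun _ => Nat.cast_nonneg k) finZeroElim
  refine ⟨y', ?_, fun s hs => ?_⟩
  · simpa [IsPeriodicPt, IsFixedPt, ← zit_natCast_s18] using hper
  · simpa [zit_natCast_s18] using htrace 0 s (Nat.cast_nonneg s) (Nat.cast_le.2 hs)

lemma abs_ciInf_le {ι : Type*} [Nonempty ι] {u : ι → ℝ} {M : ℝ} (hu : ∀ i, |u i| ≤ M) :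
    |⨅ i, u i| ≤ M := by
  have hbdd : BddBelow (Set.range u) :=
    ⟨-M, by rintro _ ⟨i, rfl⟩; exact neg_le_of_abs_le (hu i)⟩
  obtain ⟨i⟩ := ‹Nonempty ι›
  exact abs_le.2 ⟨le_ciInf fun i => neg_le_of_abs_le (hu i),
    ciInf_le_of_le hbdd i (le_of_abs_le (hu i))⟩

lemma abs_ciSup_le {ι : Type*} [Nonempty ι] {u : ι → ℝ} {M : ℝ} (hu : ∀ i, |u i| ≤ M) :
    |⨆ i, u i| ≤ M := by
  have hbdd : BddAbove (Set.range u) := ⟨M, by rintro _ ⟨i, rfl⟩; exact le_of_abs_le (hu i)⟩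
  obtain ⟨i⟩ := ‹Nonempty ι›
  exact abs_le.2 ⟨le_ciSup_of_le hbdd i (neg_le_of_abs_le (hu i)),
    ciSup_le fun i => le_of_abs_le (hu i)⟩

section ProductAverages

variable {X Y : Type*} {T : X → X} {S : Y → Y} {f : X × Y → ℝ}

lemma abs_le_of_tendsto_birk2 {M L : ℝ} (hf : ∀ p, |f p| ≤ M) {x : X} {y : Y}
    (hL : Tendsto (birk2 T S f · x y) atTop (𝓝 L)) : |L| ≤ M :=
  le_of_tendsto' (continuous_abs.tendsto L |>.comp hL) fun k =>
    abs_birkhoffAverage_le hf k (x, y)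

lemma le_beta2 {M c : ℝ} (hf : ∀ p, |f p| ≤ M) {y : Y} (hy : ∃ x, (x, y) ∈ reg2 T S f)
    (hc : ∀ x L, Tendsto (birk2 T S f · x y) atTop (𝓝 L) → c ≤ L) :
    c ≤ beta2 T S f := by
  have hbdd : BddAbove {r | ∃ y : Y, (∃ x : X, (x, y) ∈ reg2 T S f) ∧
      r = sInf {L | ∃ x : X, (x, y) ∈ reg2 T S f ∧
        Tendsto (fun k : ℕ => birk2 T S f k x y) atTop (𝓝 L)}} := by
    refine ⟨M, ?_⟩
    rintro r ⟨y, ⟨x, L, hL⟩, rfl⟩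
    have hbelow : BddBelow {L | ∃ x : X, (x, y) ∈ reg2 T S f ∧
        Tendsto (fun k : ℕ => birk2 T S f k x y) atTop (𝓝 L)} :=
      ⟨-M, by rintro L ⟨x, -, hL⟩; exact neg_le_of_abs_le (abs_le_of_tendsto_birk2 hf hL)⟩
    exact (csInf_le hbelow ⟨x, ⟨L, hL⟩, hL⟩).trans
      (le_of_abs_le (abs_le_of_tendsto_birk2 hf hL))
  obtain ⟨x, L, hL⟩ := hy
  refine le_trans ?_ (le_csSup hbdd ⟨y, ⟨x, L, hL⟩, rfl⟩)
  exact le_csInf ⟨L, x, ⟨L, hL⟩, hL⟩ fun L ⟨x, _, hL⟩ => hc x L hL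

lemma exists_forall_lt_birk2_of_lt_delta2 [Nonempty X] [Nonempty Y] {M c : ℝ}
    (hf : ∀ p, |f p| ≤ M) (hc : c < delta2 T S f) (N : ℕ) :
    ∃ k ≥ N, ∃ y, ∀ x, c < birk2 T S f k x y := by
  have hinf : ∀ k y, |⨅ x, birk2 T S f k x y| ≤ M := fun k y =>
    abs_ciInf_le fun x => abs_birkhoffAverage_le hf k (x, y)
  have hbdd : IsBoundedUnder (· ≥ ·) atTop fun k => ⨆ y, ⨅ x, birk2 T S f k x y :=
    isBoundedUnder_of ⟨-M, fun k => neg_le_of_abs_le (abs_ciSup_le (hinf k))⟩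
  obtain ⟨k, hk, hck⟩ :=
    frequently_atTop.1 (frequently_lt_of_lt_limsup hbdd.isCoboundedUnder_le hc) N
  obtain ⟨y, hy⟩ := exists_lt_of_lt_ciSup hck
  refine ⟨k, hk, y, fun x => hy.trans_le (ciInf_le ⟨-M, ?_⟩ x)⟩
  rintro _ ⟨x, rfl⟩
  exact neg_le_of_abs_le (abs_birkhoffAverage_le hf k (x, y))

end ProductAverages

theorem stmt18_general
    {X Y : Type*}
    [MetricSpace X] [CompactSpace X]
    [MetricSpace Y] [CompactSpace Y] [Nonempty Y]
    (T : X ≃ₜ X) (S : Y ≃ₜ Y) (f : X × Y → ℝ) (hf : Continuous f)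
    (hspecY : PerSpecProp S) (hper : (perPts ⇑T).Nonempty) :
    delta2 (⇑T) (⇑S) f ≤ beta2 (⇑T) (⇑S) f := by
  obtain ⟨M, hM⟩ : ∃ M, ∀ p, |f p| ≤ M := by
    simpa using isCompact_univ.exists_bound_of_continuousOn hf.continuousOn
  obtain ⟨x₀, p, hp, hx₀⟩ := hper
  have : Nonempty X := ⟨x₀⟩
  refine le_of_forall_pos_le_add fun ε hε => ?_
  obtain ⟨η, hη, hfη⟩ := Metric.uniformContinuous_iff.1
    (CompactSpace.uniformContinuous_of_continuous hf) (ε / 3) (by positivity)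
  obtain ⟨D, hD⟩ := hspecY.exists_isPeriodicPt_tracing hη
  obtain ⟨k, hk, y, hy⟩ := exists_forall_lt_birk2_of_lt_delta2 hM
    (sub_lt_self (delta2 T S f) (by positivity : 0 < ε / 3)) (max 1 ⌈2 * D * M / (ε / 3)⌉₊)
  obtain ⟨y', hy'per, hy'y⟩ := hD k y
  have hkD : 2 * D * M ≤ k * (ε / 3) := by
    rw [← div_le_iff₀ (by positivity)]
    exact (Nat.le_ceil _).trans (Nat.cast_le.2 (le_of_max_le_right hk))
  have hblock (x : X) :
      delta2 T S f - ε ≤ birkhoffAverage ℝ (Prod.map T S) f (k + D) (x, y') := by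
    have := le_birkhoffAverage_add_of_dist_le (x := (x, y')) (y := (x, y)) hM (by omega)
      (fun s hs => (hfη (by simp [Prod.dist_eq, hy'y s hs.le])).le) (hy x).le hkD
    linarith
  have hinv : Set.MapsTo (Prod.map T S)^[k + D] {q | q.2 = y'} {q | q.2 = y'} := by
    rintro q rfl
    simpa using hy'per.eq
  have hreg : IsPeriodicPt (Prod.map T S) (p * (k + D)) (x₀, y') :=
    (IsPeriodicPt.mul_const hx₀ _).prodMap (hy'per.const_mul p)
  refine sub_le_iff_le_add.1 (le_beta2 hM ⟨x₀, _, hreg.tendsto_birkhoffAverage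
    (Nat.mul_ne_zero hp.ne' (by omega)) f⟩ fun x L hL => ?_)
  refine le_of_tendsto_birkhoffAverage (by omega) hinv ?_ rfl hL
  rintro ⟨x', _⟩ rfl
  exact hblock x'

/-- if `(Y, S)` has the periodic specification property and `(X, T)`
has at least one periodic point, then `β(f) ≥ δ(f)`.  (In particular this holds when
both systems have the periodic specification property.) -/
theorem stmt18
    {X Y : Type*}
    [MetricSpace X] [CompactSpace X] [Nonempty X]
    [MetricSpace Y] [CompactSpace Y] [Nonempty Y]
    (T : X ≃ₜ X) (S : Y ≃ₜ Y) (f : X × Y → ℝ) (hf : Continuous f)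
    (hspecY : PerSpecProp S) (hper : (perPts ⇑T).Nonempty) :
    delta2 (⇑T) (⇑S) f ≤ beta2 (⇑T) (⇑S) f :=
  stmt18_general T S f hf hspecY hper
end
end
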